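/- With the setting of the previous statement, if z₁(y) = Φ₁(y) • c for the fundamental matrix Φ₁ on [a,b] with Φ₁(a) = 1, and Φ₂ is the fundamental matrix on [b,c] with Φ₂(b) = 1, then z₂(y) = Φ₂(y) • (B⁻¹ • D • Φ₁(b)) • c for all y ∈ [b,c]. In particular the coefficient vector c^{(2)} on the second interval depends linearly on c, i.e., c^{(2)} = U • c with transfer matrix U = B⁻¹ • D • Φ₁(b). -/

import Mathlib

open Matrix Set

/-!
With `U = B⁻¹ D Φ₁(b)`, both `z₂` and `y ↦ Φ₂ y *ᵥ (U *ᵥ c)` solve the linear system `z' = A₂ z`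
on `[b, c]`. They agree at `b`: `Φ₂ b = 1`, and since `B` is invertible the conjugation condition
`B z₂(b) = D Φ₁(b) c` gives `z₂(b) = U c`. A continuous coefficient matrix is bounded on the
compact interval, so the vector field is uniformly Lipschitz there and the two solutions coincide
by Grönwall uniqueness.
-/

theorem hasDerivWithinAt_mulVec_const {𝕜 : Type*} [NontriviallyNormedField 𝕜]
    {m n : Type*} [Fintype m] [Fintype n] {Φ : 𝕜 → Matrix m n 𝕜} {Φ' : Matrix m n 𝕜}
    {s : Set 𝕜} {t : 𝕜} (hΦ : ∀ k j, HasDerivWithinAt (fun y => Φ y k j) (Φ' k j) s t)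
    (w : n → 𝕜) : HasDerivWithinAt (fun y => Φ y *ᵥ w) (Φ' *ᵥ w) s t :=
  hasDerivWithinAt_pi.2 fun k => HasDerivWithinAt.fun_sum fun j _ => (hΦ k j).mul_const (w j)

section LinftyOpNorm

attribute [local instance] Matrix.linftyOpNormedAddCommGroup

theorem Matrix.lipschitzWith_linftyOpNNNorm_mulVec {ι : Type*} [Fintype ι] (M : Matrix ι ι ℝ) :
    LipschitzWith ‖M‖₊ (M *ᵥ ·) :=
  LipschitzWith.of_dist_le_mul fun x y => by
    simpa only [dist_eq_norm, ← mulVec_sub, coe_nnnorm] using linfty_opNorm_mulVec M (x - y)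

theorem eqOn_Icc_of_hasDerivWithinAt_mulVec {ι : Type*} [Fintype ι] {A : ℝ → Matrix ι ι ℝ}
    {b c : ℝ} (hA : ContinuousOn A (Icc b c)) {f g : ℝ → ι → ℝ}
    (hf : ∀ t ∈ Icc b c, HasDerivWithinAt f (A t *ᵥ f t) (Icc b c) t)
    (hg : ∀ t ∈ Icc b c, HasDerivWithinAt g (A t *ᵥ g t) (Icc b c) t)
    (hfg : f b = g b) : EqOn f g (Icc b c) := by
  obtain ⟨K, hK⟩ :=
    (isCompact_Icc.image_of_continuousOn (continuous_nnnorm.comp_continuousOn hA)).bddAbove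
  have hlip : ∀ t ∈ Ico b c, LipschitzOnWith K (A t *ᵥ ·) univ := fun t ht =>
    ((lipschitzWith_linftyOpNNNorm_mulVec (A t)).weaken
      (hK (mem_image_of_mem _ (Ico_subset_Icc_self ht)))).lipschitzOnWith
  have hIci : ∀ h : ℝ → ι → ℝ, (∀ t ∈ Icc b c, HasDerivWithinAt h (A t *ᵥ h t) (Icc b c) t) →
      ∀ t ∈ Ico b c, HasDerivWithinAt h (A t *ᵥ h t) (Ici t) t := fun h hh t ht =>
    (hh t (Ico_subset_Icc_self ht)).mono_of_mem_nhdsWithin (Icc_mem_nhdsGE_of_mem ht)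
  exact ODE_solution_unique_of_mem_Icc_right hlip
    (fun t ht => (hf t ht).continuousWithinAt) (hIci f hf) (fun _ _ => trivial)
    (fun t ht => (hg t ht).continuousWithinAt) (hIci g hg) (fun _ _ => trivial) hfg

end LinftyOpNorm

theorem stmt_9_general {N : ℕ} (a b c : ℝ) (hab : a ≤ b)
    (A₂ : ℝ → Matrix (Fin N) (Fin N) ℝ)
    (hA₂ : ContinuousOn A₂ (Set.Icc b c))
    (Φ₁ Φ₂ : ℝ → Matrix (Fin N) (Fin N) ℝ)
    (hΦ₂ : ∀ y ∈ Set.Icc b c, ∀ k j,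
      HasDerivWithinAt (fun y' => Φ₂ y' k j) ((A₂ y * Φ₂ y) k j) (Set.Icc b c) y)
    (hΦ₂b : Φ₂ b = 1)
    (B D : Matrix (Fin N) (Fin N) ℝ) (hB : IsUnit B)
    (cvec : Fin N → ℝ)
    (z₁ z₂ : ℝ → Fin N → ℝ)
    (hz₁ : ∀ y ∈ Set.Icc a b, z₁ y = Φ₁ y *ᵥ cvec)
    (hz₂ : ∀ y ∈ Set.Icc b c, HasDerivWithinAt z₂ (A₂ y *ᵥ z₂ y) (Set.Icc b c) y)
    (hconj : B *ᵥ z₂ b = D *ᵥ z₁ b) :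
    ∀ y ∈ Set.Icc b c, z₂ y = Φ₂ y *ᵥ ((B⁻¹ * D * Φ₁ b) *ᵥ cvec) := by
  have : Invertible B := B.invertibleOfIsUnitDet ((isUnit_iff_isUnit_det B).1 hB)
  have hz₂b : z₂ b = (B⁻¹ * D * Φ₁ b) *ᵥ cvec := by
    rw [← mulVec_mulVec, ← mulVec_mulVec, ← hz₁ b ⟨hab, le_rfl⟩, ← hconj]
    exact (inv_mulVec_eq_vec rfl).symm
  have hsol : ∀ t ∈ Icc b c, HasDerivWithinAt (fun y => Φ₂ y *ᵥ ((B⁻¹ * D * Φ₁ b) *ᵥ cvec))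
      (A₂ t *ᵥ (Φ₂ t *ᵥ ((B⁻¹ * D * Φ₁ b) *ᵥ cvec))) (Icc b c) t := fun t ht =>
    (hasDerivWithinAt_mulVec_const (hΦ₂ t ht) _).congr_deriv (mulVec_mulVec _ _ _).symm
  exact eqOn_Icc_of_hasDerivWithinAt_mulVec hA₂ hz₂ hsol (by rw [hz₂b, hΦ₂b, one_mulVec])

/-- Transfer of coefficients across a conjugation point: if z₁ = Φ₁ c on [a,b]
and B z₂(b) = D z₁(b), then z₂ = Φ₂ (B⁻¹ D Φ₁(b)) c on [b,c]; the transfer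
matrix is U = B⁻¹ D Φ₁(b). -/
theorem stmt_9 {N : ℕ} (a b c : ℝ) (hab : a ≤ b) (hbc : b ≤ c)
    (A₁ A₂ : ℝ → Matrix (Fin N) (Fin N) ℝ)
    (hA₁ : ContinuousOn A₁ (Set.Icc a b))
    (hA₂ : ContinuousOn A₂ (Set.Icc b c))
    (Φ₁ Φ₂ : ℝ → Matrix (Fin N) (Fin N) ℝ)
    (hΦ₁ : ∀ y ∈ Set.Icc a b, ∀ k j,
      HasDerivWithinAt (fun y' => Φ₁ y' k j) ((A₁ y * Φ₁ y) k j) (Set.Icc a b) y)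
    (hΦ₁a : Φ₁ a = 1)
    (hΦ₂ : ∀ y ∈ Set.Icc b c, ∀ k j,
      HasDerivWithinAt (fun y' => Φ₂ y' k j) ((A₂ y * Φ₂ y) k j) (Set.Icc b c) y)
    (hΦ₂b : Φ₂ b = 1)
    (B D : Matrix (Fin N) (Fin N) ℝ) (hB : IsUnit B)
    (cvec : Fin N → ℝ)
    (z₁ z₂ : ℝ → Fin N → ℝ)
    (hz₁ : ∀ y ∈ Set.Icc a b, z₁ y = Φ₁ y *ᵥ cvec)
    (hz₂ : ∀ y ∈ Set.Icc b c, HasDerivWithinAt z₂ (A₂ y *ᵥ z₂ y) (Set.Icc b c) y)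
    (hconj : B *ᵥ z₂ b = D *ᵥ z₁ b) :
    ∀ y ∈ Set.Icc b c, z₂ y = Φ₂ y *ᵥ ((B⁻¹ * D * Φ₁ b) *ᵥ cvec) :=
  stmt_9_general a b c hab A₂ hA₂ Φ₁ Φ₂ hΦ₂ hΦ₂b B D hB cvec z₁ z₂ hz₁ hz₂ hconj
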